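/- arXiv:1506.02468 — 5 statements merged into one kernel-verified Lean document; each statement's English description precedes it below -/
import Mathlib

section
/- Let P ∈ ℝ[x,y] be a polynomial of degree k ≥ 1 in two variables, and let P = P_0 + P_1 + … + P_k be its decomposition into homogeneous components, P_j homogeneous of degree j. If the function θ ↦ P(cos θ, sin θ) is constant on ℝ, then P_k(1, i) = 0, where P_k is evaluated over ℂ via the inclusion ℝ ⊆ ℂ and i denotes the imaginary unit. -/
/-!
Put `z = e^{iθ}`. Then `z cos θ = (z² + 1)/2` and `z sin θ = -(i/2)(z² - 1)` are polynomials
in `z`, so, by homogeneity of the components,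
`z^k P(cos θ, sin θ) = ∑_j z^{k-j} P_j(z cos θ, z sin θ)` is the value at `z` of a polynomial
`Q`. If `P(cos θ, sin θ) = c` for all `θ`, then `Q` agrees with `c X^k` on the unit circle,
hence everywhere. At `z = 0` only `j = k` survives, giving
`0 = Q(0) = P_k(1/2, i/2) = 2^{-k} P_k(1, i)`.
-/

open Finset
open scoped Polynomial

namespace MvPolynomial

variable {σ R : Type*} [CommSemiring R]

theorem IsHomogeneous.eval_smul {φ : MvPolynomial σ R} {n : ℕ} (hφ : φ.IsHomogeneous n)
    (c : R) (x : σ → R) : eval (c • x) φ = c ^ n * eval x φ := by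
  rw [eval_eq, eval_eq, mul_sum]
  refine sum_congr rfl fun d hd => ?_
  have hdeg : ∑ i ∈ d.support, d i = n := by
    rw [← Finsupp.degree_apply, Finsupp.degree_eq_weight_one]
    exact hφ (mem_support_iff.mp hd)
  simp only [Pi.smul_apply, smul_eq_mul, mul_pow, prod_mul_distrib, prod_pow_eq_pow_sum, hdeg]
  ring

theorem map_homogeneousComponent {S : Type*} [CommSemiring S] (f : R →+* S) (n : ℕ)
    (φ : MvPolynomial σ R) :
    map f (homogeneousComponent n φ) = homogeneousComponent n (map f φ) := by
  ext d
  simp only [coeff_map, coeff_homogeneousComponent]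
  split_ifs <;> simp

theorem totalDegree_map_le {S : Type*} [CommSemiring S] (f : R →+* S) (φ : MvPolynomial σ R) :
    (map f φ).totalDegree ≤ φ.totalDegree :=
  Finset.sup_mono (support_map_subset f φ)

theorem sum_homogeneousComponent_of_totalDegree_le {φ : MvPolynomial σ R} {n : ℕ}
    (h : φ.totalDegree ≤ n) : ∑ i ∈ range (n + 1), homogeneousComponent i φ = φ := by
  rw [← sum_subset (range_subset_range.mpr (Nat.succ_le_succ h)) fun i _ hi =>
    homogeneousComponent_eq_zero i φ (by simpa using hi), sum_homogeneousComponent]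

theorem polynomial_eval_aeval (g : σ → Polynomial R) (z : R) (p : MvPolynomial σ R) :
    (aeval g p).eval z = eval (fun i => (g i).eval z) p := by
  rw [← Polynomial.coe_aeval_eq_eval, comp_aeval_apply]
  simp [Polynomial.coe_aeval_eq_eval]

/-- The degree-`k` homogenization `∑_{j ≤ k} p_j T^{k-j}` of `p`, evaluated at `(g, X)`. -/
noncomputable def homogenizedAeval (g : σ → Polynomial R) (k : ℕ) (p : MvPolynomial σ R) :
    Polynomial R :=
  ∑ j ∈ range (k + 1), Polynomial.X ^ (k - j) * aeval g (homogeneousComponent j p)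

theorem eval_homogenizedAeval {g : σ → Polynomial R} {k : ℕ} {p : MvPolynomial σ R}
    (hp : p.totalDegree ≤ k) {z : R} {x : σ → R} (hg : ∀ i, (g i).eval z = z * x i) :
    (homogenizedAeval g k p).eval z = z ^ k * eval x p := by
  have hgz : (fun i => (g i).eval z) = z • x := _root_.funext hg
  calc (homogenizedAeval g k p).eval z
      = ∑ j ∈ range (k + 1), z ^ (k - j) * z ^ j * eval x (homogeneousComponent j p) := by
        simp only [homogenizedAeval, Polynomial.eval_finsetSum, Polynomial.eval_mul,
          Polynomial.eval_pow, Polynomial.eval_X, polynomial_eval_aeval, hgz,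
          (homogeneousComponent_isHomogeneous _ p).eval_smul, mul_assoc]
    _ = z ^ k * ∑ j ∈ range (k + 1), eval x (homogeneousComponent j p) := by
        rw [mul_sum]
        refine sum_congr rfl fun j hj => ?_
        rw [← pow_add, Nat.sub_add_cancel (Nat.lt_succ_iff.mp (mem_range.mp hj))]
    _ = z ^ k * eval x p := by
        rw [← map_sum, sum_homogeneousComponent_of_totalDegree_le hp]

theorem eval_zero_homogenizedAeval (g : σ → Polynomial R) (k : ℕ) (p : MvPolynomial σ R) :
    (homogenizedAeval g k p).eval 0 = eval (fun i => (g i).eval 0) (homogeneousComponent k p) := by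
  rw [homogenizedAeval, Polynomial.eval_finsetSum, sum_eq_single_of_mem k (self_mem_range_succ k)]
  · simp [polynomial_eval_aeval]
  · intro j hj hjk
    have : k - j ≠ 0 := by have := mem_range.mp hj; omega
    simp [zero_pow this]

end MvPolynomial

theorem Polynomial.eq_of_forall_eval_circleMap_eq {c : ℂ} {R : ℝ} (hR : R ≠ 0)
    {p q : Polynomial ℂ} (h : ∀ θ, p.eval (circleMap c R θ) = q.eval (circleMap c R θ)) :
    p = q := by
  have hinj := injOn_circleMap_of_abs_sub_le' (c := c) hR (sub_zero (2 * Real.pi)).le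
  refine eq_of_infinite_eval_eq p q (((Set.Ico_infinite Real.two_pi_pos).image hinj).mono ?_)
  rintro _ ⟨θ, -, rfl⟩
  exact h θ

open Polynomial Complex

theorem Complex.exp_mul_I_mul_cos (θ : ℝ) :
    exp (θ * I) * Real.cos θ = 1 / 2 * (exp (θ * I) ^ 2 + 1) := by
  rw [exp_mul_I, ofReal_cos]
  linear_combination (-(sin θ ^ 2) / 2) * I_sq + 1 / 2 * cos_sq_add_sin_sq (θ : ℂ)

theorem Complex.exp_mul_I_mul_sin (θ : ℝ) :
    exp (θ * I) * Real.sin θ = -(I / 2) * (exp (θ * I) ^ 2 - 1) := by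
  rw [exp_mul_I, ofReal_sin]
  linear_combination
    (cos θ * sin θ + sin θ ^ 2 * I / 2) * I_sq + I / 2 * cos_sq_add_sin_sq (θ : ℂ)

/-- If `P ∈ ℝ[x,y]` has degree `k ≥ 1` and `θ ↦ P(cos θ, sin θ)` is constant on `ℝ`,
then the degree-`k` homogeneous component `P_k` of `P` satisfies `P_k(1, i) = 0` in `ℂ`. -/
theorem stmt_0 (P : MvPolynomial (Fin 2) ℝ) (k : ℕ) (hk : 1 ≤ k)
    (hdeg : P.totalDegree = k)
    (hconst : ∀ θ₁ θ₂ : ℝ,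
      MvPolynomial.eval ![Real.cos θ₁, Real.sin θ₁] P =
      MvPolynomial.eval ![Real.cos θ₂, Real.sin θ₂] P) :
    MvPolynomial.eval ![(1 : ℂ), Complex.I]
      (MvPolynomial.map (algebraMap ℝ ℂ) (MvPolynomial.homogeneousComponent k P)) = 0 := by
  set g : Fin 2 → ℂ[X] := ![C (1 / 2) * (X ^ 2 + 1), C (-(I / 2)) * (X ^ 2 - 1)]
  set Q := MvPolynomial.homogenizedAeval g k (MvPolynomial.map (algebraMap ℝ ℂ) P)
  set c := MvPolynomial.eval ![Real.cos 0, Real.sin 0] P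
  have hQ_circle (θ : ℝ) :
      Q.eval (exp (θ * I)) = (C (c : ℂ) * X ^ k).eval (exp (θ * I)) := by
    have hg : ∀ i, (g i).eval (exp (θ * I)) =
        exp (θ * I) * (algebraMap ℝ ℂ ∘ ![Real.cos θ, Real.sin θ]) i := by
      intro i
      fin_cases i
      · simpa [g] using (exp_mul_I_mul_cos θ).symm
      · simpa [g] using (exp_mul_I_mul_sin θ).symm
    have hdeg_map := (MvPolynomial.totalDegree_map_le (algebraMap ℝ ℂ) P).trans hdeg.le
    rw [MvPolynomial.eval_homogenizedAeval hdeg_map hg,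
      ← MvPolynomial.map_eval, hconst θ 0, eval_mul, eval_C, eval_pow, eval_X, mul_comm]
    rfl
  have hQ : Q = C (c : ℂ) * X ^ k :=
    Polynomial.eq_of_forall_eval_circleMap_eq (c := 0) one_ne_zero fun θ => by
      simpa [circleMap] using hQ_circle θ
  have hg0 : (fun i => (g i).eval 0) = (1 / 2 : ℂ) • ![1, I] := by
    ext i
    fin_cases i <;> simp [g, div_eq_inv_mul]
  have h0 := congrArg (Polynomial.eval 0) hQ
  rw [MvPolynomial.eval_zero_homogenizedAeval, hg0,
    (MvPolynomial.homogeneousComponent_isHomogeneous k _).eval_smul,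
    ← MvPolynomial.map_homogeneousComponent] at h0
  simpa [zero_pow (by omega : k ≠ 0)] using h0
end

section
/- Let V be an n-dimensional real inner product space with n ≥ 2, let R be an algebraic curvature tensor on V, and fix an orthonormal basis (e_1,…,e_n). Define ‖R‖² = Σ_{i,j,k,l} R(e_i,e_j,e_k,e_l)², P(x,y) = Σ_{i,j,k} R(x,e_i,e_j,e_k)·R(y,e_i,e_j,e_k), and Q(x,y,z,w) = Σ_{i,j} R(x,e_i,y,e_j)·R(z,e_i,w,e_j). Assume R is Einstein, i.e. there is K ∈ ℝ with Σ_i R(x,e_i,y,e_i) = K⟨x,y⟩ for all x,y ∈ V, and assume there is C ∈ ℝ such that −3‖R‖² − 6·P(u,u) + 2·Q(u,u,u,u) = C for every unit vector u ∈ V. Then for every unit vector u ∈ V, Q(u,u,u,u) = −(3/2)‖R‖² + 2K²/(n+3) − (n+1)C/(2(n+3)); in particular Q(u,u,u,u) (the trace of the square of the Jacobi operator R_u) is independent of the unit vector u. Moreover ‖R‖² = n·(2K² − (n+2)C)/(3(n+1)(n+3)). -/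
/-!
The hypothesis says that the quartic form
`F(u) = 2 Q(u,u,u,u) - 6 P(u,u) ⟪u,u⟫ - (C + 3‖R‖²) ⟪u,u⟫²` vanishes on the unit sphere, hence
everywhere by homogeneity. Polarizing `F` and tracing its `(2,2)`-part over an orthonormal basis,
the Einstein condition and the first Bianchi identity express every trace of `Q` through `K` and
`P`, and the identity becomes `P(x,x) = λ ⟪x,x⟫` with `λ` explicit in `n`, `K`, `C`, `‖R‖²`.
At a unit vector this determines `Q(u,u,u,u)`; tracing it once more gives `‖R‖² = n λ`.
-/

open scoped RealInnerProductSpace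

theorem OrthonormalBasis.sum_inner_mul_apply {ι V : Type*} [Fintype ι] [NormedAddCommGroup V]
    [InnerProductSpace ℝ V] (e : OrthonormalBasis ι ℝ V) (f : V →ₗ[ℝ] ℝ) (x : V) :
    ∑ i, ⟪x, e i⟫ * f (e i) = f x := by
  conv_rhs => rw [← e.sum_repr' x]
  simp [real_inner_comm]

section QuarticForm

variable {V : Type*} [NormedAddCommGroup V] [InnerProductSpace ℝ V]
  (Q : V →ₗ[ℝ] V →ₗ[ℝ] V →ₗ[ℝ] V →ₗ[ℝ] ℝ) (P : V →ₗ[ℝ] V →ₗ[ℝ] ℝ) (c : ℝ)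

def quarticForm (u : V) : ℝ :=
  2 * Q u u u u - 6 * P u u * ⟪u, u⟫ - c * ⟪u, u⟫ ^ 2

lemma quarticForm_smul (t : ℝ) (u : V) :
    quarticForm Q P c (t • u) = t ^ 4 * quarticForm Q P c u := by
  simp only [quarticForm, map_smul, LinearMap.smul_apply, smul_eq_mul, real_inner_smul_left,
    real_inner_smul_right]
  ring

lemma quarticForm_eq_zero_of_norm_eq_one (h : ∀ u, ‖u‖ = 1 → quarticForm Q P c u = 0) (u : V) :
    quarticForm Q P c u = 0 := by
  rcases eq_or_ne u 0 with rfl | hu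
  · simp [quarticForm]
  · have hu' : ‖u‖ ≠ 0 := norm_ne_zero_iff.mpr hu
    have hunit : ‖‖u‖⁻¹ • u‖ = 1 := by rw [norm_smul, norm_inv, norm_norm, inv_mul_cancel₀ hu']
    rw [← smul_inv_smul₀ hu' u, quarticForm_smul, h _ hunit, mul_zero]

lemma quarticForm_polarization (x v : V) :
    quarticForm Q P c (x + v) + quarticForm Q P c (x - v)
        - 2 * quarticForm Q P c x - 2 * quarticForm Q P c v =
      4 * (Q x x v v + Q x v x v + Q x v v x + Q v x x v + Q v x v x + Q v v x x)
        - 12 * (P x x * ⟪v, v⟫ + P v v * ⟪x, x⟫) - 24 * ⟪x, v⟫ * (P x v + P v x)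
        - c * (4 * ⟪x, x⟫ * ⟪v, v⟫ + 8 * ⟪x, v⟫ ^ 2) := by
  -- Instance search does not find the subtraction on the nested type `V →ₗ V →ₗ V →ₗ ℝ`.
  rw [show x - v = x + (-1 : ℝ) • v by rw [neg_one_smul, sub_eq_add_neg]]
  simp only [quarticForm, map_add, map_smul, LinearMap.add_apply, LinearMap.smul_apply,
    smul_eq_mul, inner_add_left, inner_add_right, real_inner_smul_left, real_inner_smul_right,
    real_inner_comm x v]
  ring

end QuarticForm

structure IsAlgCurvatureTensor {V : Type*} [AddCommGroup V] [Module ℝ V]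
    (R : V →ₗ[ℝ] V →ₗ[ℝ] V →ₗ[ℝ] V →ₗ[ℝ] ℝ) : Prop where
  antisymm : ∀ x y z w, R x y z w = -R y x z w
  pair_symm : ∀ x y z w, R x y z w = R z w x y
  bianchi : ∀ x y z w, R x y z w + R y z x w + R z x y w = 0

namespace IsAlgCurvatureTensor

variable {V : Type*} [AddCommGroup V] [Module ℝ V] {R : V →ₗ[ℝ] V →ₗ[ℝ] V →ₗ[ℝ] V →ₗ[ℝ] ℝ}

lemma antisymm_right (hR : IsAlgCurvatureTensor R) (x y z w : V) : R x y z w = -R x y w z := by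
  rw [hR.pair_symm, hR.antisymm z, hR.pair_symm w]

lemma swap_swap (hR : IsAlgCurvatureTensor R) (x y z w : V) : R y x w z = R x y z w := by
  rw [hR.antisymm, hR.antisymm_right, neg_neg]

lemma bianchi_third (hR : IsAlgCurvatureTensor R) (x y z w : V) :
    R y z x w = R x z y w - R x y z w := by
  linarith [hR.bianchi x y z w, hR.antisymm z x y w]

end IsAlgCurvatureTensor

section Pairings

variable {ι V : Type*} [Fintype ι] [NormedAddCommGroup V] [InnerProductSpace ℝ V]
  (R : V →ₗ[ℝ] V →ₗ[ℝ] V →ₗ[ℝ] V →ₗ[ℝ] ℝ) (e : ι → V)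

def curvatureNormSq : ℝ :=
  ∑ i, ∑ j, ∑ k, ∑ l, R (e i) (e j) (e k) (e l) ^ 2

/-- The form `Q` (so `jacobiPairing R e u u u u = tr (R_u²)` for orthonormal `e`), bundled as a
4-linear map so that polarizing it is `map_add`. -/
def jacobiPairing : V →ₗ[ℝ] V →ₗ[ℝ] V →ₗ[ℝ] V →ₗ[ℝ] ℝ :=
  ∑ j, ∑ k,
    let β := (R.flip (e j)).compr₂ (LinearMap.applyₗ (e k))
    β.compr₂ (LinearMap.toSpanSingleton ℝ _ β)

/-- The form `P`, bundled as a bilinear map. -/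
def interiorPairing : V →ₗ[ℝ] V →ₗ[ℝ] ℝ :=
  ∑ i, ∑ j, ∑ k,
    let γ := LinearMap.applyₗ (e k) ∘ₗ LinearMap.applyₗ (e j) ∘ₗ R.flip (e i)
    γ.smulRight γ

@[simp]
lemma jacobiPairing_apply (a b c d : V) :
    jacobiPairing R e a b c d = ∑ j, ∑ k, R a (e j) b (e k) * R c (e j) d (e k) := by
  simp [jacobiPairing]

@[simp]
lemma interiorPairing_apply (x y : V) :
    interiorPairing R e x y =
      ∑ i, ∑ j, ∑ k, R x (e i) (e j) (e k) * R y (e i) (e j) (e k) := by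
  simp [interiorPairing]

lemma jacobiPairing_comm (a b c d : V) :
    jacobiPairing R e a b c d = jacobiPairing R e c d a b := by
  simp only [jacobiPairing_apply, mul_comm]

lemma interiorPairing_comm (x y : V) : interiorPairing R e x y = interiorPairing R e y x := by
  simp only [interiorPairing_apply, mul_comm]

lemma sum_interiorPairing_self : ∑ i, interiorPairing R e (e i) (e i) = curvatureNormSq R e := by
  simp only [interiorPairing_apply, curvatureNormSq, sq]

lemma sum_jacobiPairing_xexe (x : V) :
    ∑ i, jacobiPairing R e x (e i) x (e i) = interiorPairing R e x x := by
  simp only [jacobiPairing_apply, interiorPairing_apply]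
  exact Finset.sum_comm

end Pairings

namespace IsAlgCurvatureTensor

variable {ι V : Type*} [Fintype ι] [NormedAddCommGroup V] [InnerProductSpace ℝ V]
  {R : V →ₗ[ℝ] V →ₗ[ℝ] V →ₗ[ℝ] V →ₗ[ℝ] ℝ} (e : OrthonormalBasis ι ℝ V)

lemma sum_jacobiPairing_xxee (hR : IsAlgCurvatureTensor R) {K : ℝ}
    (hE : ∀ x y, ∑ i, R x (e i) y (e i) = K * ⟪x, y⟫) (x : V) :
    ∑ i, jacobiPairing R e x x (e i) (e i) = K ^ 2 * ⟪x, x⟫ := by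
  have hE' : ∀ j k, ∑ i, R (e i) (e j) (e i) (e k) = K * ⟪e j, e k⟫ := fun j k => by
    simp only [← hR.swap_swap (e _) (e j), hE]
  calc ∑ i, jacobiPairing R e x x (e i) (e i)
      = ∑ j, ∑ k, R x (e j) x (e k) * ∑ i, R (e i) (e j) (e i) (e k) := by
        simp only [jacobiPairing_apply, Finset.mul_sum]
        rw [Finset.sum_comm]
        exact Finset.sum_congr rfl fun j _ => Finset.sum_comm
    _ = K * ∑ j, ∑ k, ⟪e j, e k⟫ * R x (e j) x (e k) := by
        simp only [hE', Finset.mul_sum]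
        exact Finset.sum_congr rfl fun j _ => Finset.sum_congr rfl fun k _ => by ring
    _ = K ^ 2 * ⟪x, x⟫ := by
        simp only [e.sum_inner_mul_apply (R x (e _) x), hE]
        ring

lemma sum_jacobiPairing_exex (hR : IsAlgCurvatureTensor R) (x : V) :
    ∑ i, jacobiPairing R e (e i) x (e i) x = interiorPairing R e x x := by
  rw [← sum_jacobiPairing_xexe]
  simp only [jacobiPairing_apply, hR.pair_symm (e _) (e _) x]
  exact Finset.sum_congr rfl fun i _ => Finset.sum_comm

/- With `T i j k = R x (e i) (e j) (e k)` and `U i j k = R (e i) (e j) x (e k)`, the sum below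
is `∑ T j i k * U i j k`. As `U` is antisymmetric in `i, j`, it equals `-∑ T i j k * U i j k`,
hence half of `∑ (T j i k - T i j k) * U i j k`, which is `∑ U i j k ^ 2` by the Bianchi
identity. -/
lemma sum_jacobiPairing_xeex (hR : IsAlgCurvatureTensor R) (x : V) :
    ∑ i, jacobiPairing R e x (e i) (e i) x = interiorPairing R e x x / 2 := by
  have hantisymm : ∑ i, jacobiPairing R e x (e i) (e i) x
      = -∑ i, ∑ j, ∑ k, R x (e i) (e j) (e k) * R (e i) (e j) x (e k) := by
    simp only [jacobiPairing_apply, ← Finset.sum_neg_distrib]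
    rw [Finset.sum_comm]
    refine Finset.sum_congr rfl fun a _ => Finset.sum_congr rfl fun b _ =>
      Finset.sum_congr rfl fun k _ => ?_
    rw [hR.antisymm (e b) (e a)]
    ring
  have hbianchi : ∑ i, jacobiPairing R e (e i) x (e i) x = ∑ i, jacobiPairing R e x (e i) (e i) x
      - ∑ i, ∑ j, ∑ k, R x (e i) (e j) (e k) * R (e i) (e j) x (e k) := by
    simp only [jacobiPairing_apply, ← Finset.sum_sub_distrib]
    refine Finset.sum_congr rfl fun i _ => Finset.sum_congr rfl fun j _ =>
      Finset.sum_congr rfl fun k _ => ?_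
    rw [hR.bianchi_third x]
    ring
  rw [hR.sum_jacobiPairing_exex] at hbianchi
  linarith

lemma interiorPairing_self_eq (hR : IsAlgCurvatureTensor R) {K c : ℝ}
    (hE : ∀ x y, ∑ i, R x (e i) y (e i) = K * ⟪x, y⟫)
    (hF : ∀ u, quarticForm (jacobiPairing R e) (interiorPairing R e) c u = 0) (x : V) :
    12 * (Fintype.card ι + 3) * interiorPairing R e x x
      = (8 * K ^ 2 - 12 * curvatureNormSq R e - c * (4 * Fintype.card ι + 8)) * ⟪x, x⟫ := by
  have htrace := Finset.sum_congr rfl fun i (_ : i ∈ Finset.univ) =>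
    quarticForm_polarization (jacobiPairing R e) (interiorPairing R e) c x (e i)
  have hnorm : ∑ i, ⟪x, e i⟫ ^ 2 = ⟪x, x⟫ := by
    simpa only [innerₗ_apply_apply, sq] using e.sum_inner_mul_apply (innerₗ V x) x
  simp only [hF, e.inner_eq_one, jacobiPairing_comm R e (e _) (e _) x x,
    jacobiPairing_comm R e (e _) x x (e _), interiorPairing_comm R e (e _) x, mul_add, mul_assoc,
    Finset.sum_add_distrib, Finset.sum_sub_distrib, ← Finset.mul_sum, ← Finset.sum_mul,
    Finset.sum_const_zero, Finset.sum_const, Finset.card_univ, nsmul_eq_mul, mul_one] at htrace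
  rw [hR.sum_jacobiPairing_xxee e hE, sum_jacobiPairing_xexe, hR.sum_jacobiPairing_xeex,
    hR.sum_jacobiPairing_exex, sum_interiorPairing_self, e.sum_inner_mul_apply, hnorm] at htrace
  linear_combination htrace

end IsAlgCurvatureTensor

theorem stmt_4_general (n : ℕ) (V : Type*) [NormedAddCommGroup V] [InnerProductSpace ℝ V]
    (e : OrthonormalBasis (Fin n) ℝ V)
    (R : V →ₗ[ℝ] V →ₗ[ℝ] V →ₗ[ℝ] V →ₗ[ℝ] ℝ)
    (hanti : ∀ x y z w : V, R x y z w = - R y x z w)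
    (hpair : ∀ x y z w : V, R x y z w = R z w x y)
    (hbianchi : ∀ x y z w : V, R x y z w + R y z x w + R z x y w = 0)
    (K C : ℝ)
    (hEinstein : ∀ x y : V, (∑ i, R x (e i) y (e i)) = K * ⟪x, y⟫)
    (hC : ∀ u : V, ‖u‖ = 1 →
      -3 * (∑ i, ∑ j, ∑ k, ∑ l, (R (e i) (e j) (e k) (e l)) ^ 2)
        - 6 * (∑ i, ∑ j, ∑ k, R u (e i) (e j) (e k) * R u (e i) (e j) (e k))
        + 2 * (∑ i, ∑ j, R u (e i) u (e j) * R u (e i) u (e j)) = C) :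
    (∀ u : V, ‖u‖ = 1 →
      (∑ i, ∑ j, R u (e i) u (e j) * R u (e i) u (e j)) =
        -(3/2) * (∑ i, ∑ j, ∑ k, ∑ l, (R (e i) (e j) (e k) (e l)) ^ 2)
          + 2 * K ^ 2 / (n + 3) - (n + 1) * C / (2 * (n + 3))) ∧
    (∑ i, ∑ j, ∑ k, ∑ l, (R (e i) (e j) (e k) (e l)) ^ 2) =
      n * (2 * K ^ 2 - (n + 2) * C) / (3 * (n + 1) * (n + 3)) := by
  rw [show ∑ i, ∑ j, ∑ k, ∑ l, R (e i) (e j) (e k) (e l) ^ 2 = curvatureNormSq R e from rfl]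
    at hC ⊢
  have hR : IsAlgCurvatureTensor R := ⟨hanti, hpair, hbianchi⟩
  have hF : ∀ u, quarticForm (jacobiPairing R e) (interiorPairing R e)
      (C + 3 * curvatureNormSq R e) u = 0 := by
    refine quarticForm_eq_zero_of_norm_eq_one _ _ _ fun u hu => ?_
    rw [quarticForm, inner_self_eq_one_of_norm_eq_one hu, ← hC u hu]
    simp only [jacobiPairing_apply, interiorPairing_apply]
    ring
  have hP := hR.interiorPairing_self_eq e hEinstein hF
  rw [Fintype.card_fin] at hP
  have hn3 : (n : ℝ) + 3 ≠ 0 := by positivity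
  have hn1 : (n : ℝ) + 1 ≠ 0 := by positivity
  refine ⟨fun u hu => ?_, ?_⟩
  · have hPu := hP u
    rw [inner_self_eq_one_of_norm_eq_one hu, mul_one] at hPu
    have hCu := hC u hu
    rw [← jacobiPairing_apply, ← interiorPairing_apply] at hCu
    rw [← jacobiPairing_apply]
    field_simp
    linear_combination ((n : ℝ) + 3) * hCu + (1 / 2 : ℝ) * hPu
  · have hS := Finset.sum_congr rfl fun i (_ : i ∈ Finset.univ) => hP (e i)
    simp only [e.inner_eq_one, mul_one, ← Finset.mul_sum, sum_interiorPairing_self,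
      Finset.sum_const, Finset.card_univ, Fintype.card_fin, nsmul_eq_mul] at hS
    field_simp
    linear_combination (1 / 4 : ℝ) * hS

/-- For an Einstein algebraic curvature tensor `R` on an `n`-dimensional real inner product
space (`n ≥ 2`) such that `−3‖R‖² − 6 P(u,u) + 2 Q(u,u,u,u) = C` for every unit vector `u`,
one has `Q(u,u,u,u) = −(3/2)‖R‖² + 2K²/(n+3) − (n+1)C/(2(n+3))` for every unit vector `u`,
and `‖R‖² = n(2K² − (n+2)C)/(3(n+1)(n+3))`. -/
theorem stmt_4 (n : ℕ) (hn : 2 ≤ n) (V : Type*) [NormedAddCommGroup V]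
    [InnerProductSpace ℝ V] [FiniteDimensional ℝ V] (hdim : Module.finrank ℝ V = n)
    (e : OrthonormalBasis (Fin n) ℝ V)
    (R : V →ₗ[ℝ] V →ₗ[ℝ] V →ₗ[ℝ] V →ₗ[ℝ] ℝ)
    (hanti : ∀ x y z w : V, R x y z w = - R y x z w)
    (hpair : ∀ x y z w : V, R x y z w = R z w x y)
    (hbianchi : ∀ x y z w : V, R x y z w + R y z x w + R z x y w = 0)
    (K C : ℝ)
    (hEinstein : ∀ x y : V, (∑ i, R x (e i) y (e i)) = K * ⟪x, y⟫)
    (hC : ∀ u : V, ‖u‖ = 1 →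
      -3 * (∑ i, ∑ j, ∑ k, ∑ l, (R (e i) (e j) (e k) (e l)) ^ 2)
        - 6 * (∑ i, ∑ j, ∑ k, R u (e i) (e j) (e k) * R u (e i) (e j) (e k))
        + 2 * (∑ i, ∑ j, R u (e i) u (e j) * R u (e i) u (e j)) = C) :
    (∀ u : V, ‖u‖ = 1 →
      (∑ i, ∑ j, R u (e i) u (e j) * R u (e i) u (e j)) =
        -(3/2) * (∑ i, ∑ j, ∑ k, ∑ l, (R (e i) (e j) (e k) (e l)) ^ 2)
          + 2 * K ^ 2 / (n + 3) - (n + 1) * C / (2 * (n + 3))) ∧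
    (∑ i, ∑ j, ∑ k, ∑ l, (R (e i) (e j) (e k) (e l)) ^ 2) =
      n * (2 * K ^ 2 - (n + 2) * C) / (3 * (n + 1) * (n + 3)) :=
  stmt_4_general n V e R hanti hpair hbianchi K C hEinstein hC
end

section
/- Let V be an n-dimensional real inner product space with orthonormal basis (e_1,…,e_n) and let R be an algebraic curvature tensor on V. Then for every x ∈ V, Σ_{b,i,j} R(x,e_i,e_b,e_j)·R(e_b,e_i,x,e_j) = (1/2)·Σ_{i,j,k} R(x,e_i,e_j,e_k)². -/
/-!
Fix `x` and put `f a b c = R(x, e_a, e_b, e_c)`. Pair symmetry and antisymmetry make `f`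
skew in its last two arguments, and the first Bianchi identity (moved to the last three slots
by pair symmetry) says that the cyclic sum of `f` vanishes. Bianchi also rewrites
`R(e_b, e_i, x, e_j) = f i b j - f b i j`, so the left-hand side is `‖f‖² - C` with
`C = Σ f a b c · f b a c`. Pairing the cyclic identity with `f` and using that the two cyclic
correlations of `f` agree after relabelling gives `‖f‖² = 2C`.
-/

theorem Finset.sum_sum_sum_rotate {ι M : Type*} [Fintype ι] [AddCommMonoid M]
    (F : ι → ι → ι → M) : ∑ a, ∑ b, ∑ c, F a b c = ∑ a, ∑ b, ∑ c, F b c a := by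
  symm
  rw [Finset.sum_comm]
  exact Finset.sum_congr rfl fun _ _ => Finset.sum_comm

theorem two_mul_sum_mul_swap_eq_sum_sq {ι K : Type*} [Fintype ι] [CommRing K]
    (f : ι → ι → ι → K) (hskew : ∀ a b c, f a c b = -f a b c)
    (hcyc : ∀ a b c, f a b c + f b c a + f c a b = 0) :
    2 * ∑ a, ∑ b, ∑ c, f a b c * f b a c = ∑ a, ∑ b, ∑ c, f a b c ^ 2 := by
  have hrot : ∑ a, ∑ b, ∑ c, f a b c * f c a b = ∑ a, ∑ b, ∑ c, f a b c * f b c a := by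
    rw [Finset.sum_sum_sum_rotate]
    simp only [mul_comm]
  have hskew_sum : ∑ a, ∑ b, ∑ c, f a b c * f b c a = -∑ a, ∑ b, ∑ c, f a b c * f b a c := by
    simp only [← Finset.sum_neg_distrib, ← mul_neg]
    exact Finset.sum_congr rfl fun a _ => Finset.sum_congr rfl fun b _ =>
      Finset.sum_congr rfl fun c _ => by rw [hskew b a c]
  have hzero : ∑ a, ∑ b, ∑ c, f a b c * (f a b c + f b c a + f c a b) = 0 := by
    simp only [hcyc, mul_zero, Finset.sum_const_zero]
  simp only [mul_add, Finset.sum_add_distrib, hrot, hskew_sum, ← sq] at hzero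
  linear_combination -hzero

namespace CurvatureTensor

variable {K V : Type*} [CommRing K] [AddCommGroup V] [Module K V]
  (R : V →ₗ[K] V →ₗ[K] V →ₗ[K] V →ₗ[K] K)

theorem apply_swap_right (hanti : ∀ x y z w : V, R x y z w = - R y x z w)
    (hpair : ∀ x y z w : V, R x y z w = R z w x y) (x y z w : V) :
    R x y w z = -R x y z w := by
  rw [hpair x y w z, hanti w z x y, ← hpair x y z w]

theorem bianchi_right (hanti : ∀ x y z w : V, R x y z w = - R y x z w)
    (hpair : ∀ x y z w : V, R x y z w = R z w x y)
    (hbianchi : ∀ x y z w : V, R x y z w + R y z x w + R z x y w = 0) (x a b c : V) :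
    R x a b c + R x b c a + R x c a b = 0 := by
  rw [hpair x a, hpair x b, hpair x c, apply_swap_right R hanti hpair b c,
    apply_swap_right R hanti hpair c a, apply_swap_right R hanti hpair a b]
  linear_combination -hbianchi a b c x

theorem apply_left_eq_sub (hanti : ∀ x y z w : V, R x y z w = - R y x z w)
    (hbianchi : ∀ x y z w : V, R x y z w + R y z x w + R z x y w = 0) (x y z w : V) :
    R y z x w = R x z y w - R x y z w := by
  rw [hanti x z]
  linear_combination hbianchi y z x w

end CurvatureTensor

theorem stmt_5_general (n : ℕ) (V : Type*) [NormedAddCommGroup V]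
    [InnerProductSpace ℝ V]
    (e : OrthonormalBasis (Fin n) ℝ V)
    (R : V →ₗ[ℝ] V →ₗ[ℝ] V →ₗ[ℝ] V →ₗ[ℝ] ℝ)
    (hanti : ∀ x y z w : V, R x y z w = - R y x z w)
    (hpair : ∀ x y z w : V, R x y z w = R z w x y)
    (hbianchi : ∀ x y z w : V, R x y z w + R y z x w + R z x y w = 0) :
    ∀ x : V, (∑ b, ∑ i, ∑ j, R x (e i) (e b) (e j) * R (e b) (e i) x (e j)) =
      (1/2) * ∑ i, ∑ j, ∑ k, (R x (e i) (e j) (e k)) ^ 2 := by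
  intro x
  set f : Fin n → Fin n → Fin n → ℝ := fun a b c => R x (e a) (e b) (e c) with hf
  have hkey := two_mul_sum_mul_swap_eq_sum_sq f
    (fun a b c => CurvatureTensor.apply_swap_right R hanti hpair x (e a) (e b) (e c))
    (fun a b c => CurvatureTensor.bianchi_right R hanti hpair hbianchi x (e a) (e b) (e c))
  calc ∑ b, ∑ i, ∑ j, R x (e i) (e b) (e j) * R (e b) (e i) x (e j)
      = ∑ i, ∑ b, ∑ j, f i b j * (f i b j - f b i j) := by
        rw [Finset.sum_comm]
        simp only [hf, CurvatureTensor.apply_left_eq_sub R hanti hbianchi x]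
    _ = ∑ i, ∑ j, ∑ k, f i j k ^ 2 - ∑ i, ∑ b, ∑ j, f i b j * f b i j := by
        simp only [mul_sub, ← sq, Finset.sum_sub_distrib]
    _ = (1/2) * ∑ i, ∑ j, ∑ k, f i j k ^ 2 := by linear_combination (-1/2 : ℝ) * hkey

/-- For an algebraic curvature tensor `R` on an `n`-dimensional real inner product space with
orthonormal basis `(e_1,…,e_n)`, for every `x`,
`Σ_{b,i,j} R(x,e_i,e_b,e_j)·R(e_b,e_i,x,e_j) = (1/2)·Σ_{i,j,k} R(x,e_i,e_j,e_k)²`. -/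
theorem stmt_5 (n : ℕ) (V : Type*) [NormedAddCommGroup V]
    [InnerProductSpace ℝ V] [FiniteDimensional ℝ V] (hdim : Module.finrank ℝ V = n)
    (e : OrthonormalBasis (Fin n) ℝ V)
    (R : V →ₗ[ℝ] V →ₗ[ℝ] V →ₗ[ℝ] V →ₗ[ℝ] ℝ)
    (hanti : ∀ x y z w : V, R x y z w = - R y x z w)
    (hpair : ∀ x y z w : V, R x y z w = R z w x y)
    (hbianchi : ∀ x y z w : V, R x y z w + R y z x w + R z x y w = 0) :
    ∀ x : V, (∑ b, ∑ i, ∑ j, R x (e i) (e b) (e j) * R (e b) (e i) x (e j)) =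
      (1/2) * ∑ i, ∑ j, ∑ k, (R x (e i) (e j) (e k)) ^ 2 :=
  stmt_5_general n V e R hanti hpair hbianchi
end

section
/- For every real number x with 0 < x < π, the series Σ_{k=1}^∞ ((−4)^k · B_{2k} / (2k · (2k)!)) · x^{2k} converges and log(sin x / x) = Σ_{k=1}^∞ ((−4)^k · B_{2k} / (2k · (2k)!)) · x^{2k}, where B_{2k} denotes the 2k-th Bernoulli number. -/
open Real Filter Finset Topology

/-- For `0 < x < π`, the series `Σ_{k≥1} ((−4)^k B_{2k}/(2k·(2k)!)) x^{2k}` converges to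
`log(sin x / x)`, where `B_{2k}` is the `2k`-th Bernoulli number. -/
theorem stmt_8 (x : ℝ) (hx0 : 0 < x) (hxpi : x < Real.pi) :
    HasSum
      (fun k : ℕ =>
        ((-4 : ℝ) ^ (k + 1) * (bernoulli (2 * (k + 1)) : ℝ) /
            (((2 * (k + 1)) * Nat.factorial (2 * (k + 1)) : ℕ) : ℝ)) * x ^ (2 * (k + 1)))
      (Real.log (Real.sin x / x)) := by
  have hpi : (0:ℝ) < π := Real.pi_pos
  set t : ℝ := x / π with ht
  have ht0 : 0 < t := div_pos hx0 hpi
  have ht1 : t < 1 := (div_lt_one hpi).mpr hxpi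
  have htsq : t ^ 2 < 1 := by nlinarith
  set a : ℕ → ℝ := fun n => t ^ 2 / ((n:ℝ) + 1) ^ 2 with ha
  have ha_pos : ∀ n, 0 < a n := by
    intro n
    exact div_pos (by positivity) (by positivity)
  have ha_le : ∀ n, a n ≤ t ^ 2 := by
    intro n
    refine div_le_self (by positivity) ?_
    nlinarith [Nat.cast_nonneg (α := ℝ) n]
  have ha_lt : ∀ n, a n < 1 := fun n => lt_of_le_of_lt (ha_le n) htsq
  have h1a : ∀ n, 0 < 1 - a n := fun n => by linarith [ha_lt n]
  -- summability of a
  have hsum_a : Summable a := by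
    have : Summable (fun n : ℕ => 1 / ((n:ℝ) + 1) ^ 2) := by
      have := (summable_nat_add_iff (f := fun n : ℕ => 1 / (n:ℝ) ^ 2) 1).mpr
        (Real.summable_one_div_nat_pow.mpr one_lt_two)
      simpa using this
    simpa [ha, div_eq_mul_inv, one_div] using this.mul_left (t ^ 2)
  -- bound -log(1-a n)
  have hlog_bound : ∀ n, -Real.log (1 - a n) ≤ a n / (1 - t ^ 2) := by
    intro n
    have h1 : -Real.log (1 - a n) = Real.log ((1 - a n)⁻¹) := by
      rw [Real.log_inv]
    rw [h1]
    have h2 := Real.log_le_sub_one_of_pos (inv_pos.mpr (h1a n))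
    have h3 : (1 - a n)⁻¹ - 1 = a n / (1 - a n) := by
      rw [eq_div_iff (h1a n).ne', sub_mul, inv_mul_cancel₀ (h1a n).ne']
      ring
    have h4 : a n / (1 - a n) ≤ a n / (1 - t ^ 2) := by
      gcongr <;> linarith [ha_pos n, ha_le n, htsq]
    linarith
  have hsum_La : Summable (fun n => -Real.log (1 - a n)) := by
    refine Summable.of_nonneg_of_le (fun n => ?_) hlog_bound ?_
    · have := Real.log_nonpos (x := 1 - a n) (by linarith [ha_lt n]) (by linarith [ha_pos n])
      linarith
    · exact hsum_a.div_const _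
  have hsum_L : Summable (fun n => Real.log (1 - a n)) := by
    simpa using hsum_La.neg
  -- Euler product → tendsto of partial log sums
  have hsin_pos : 0 < Real.sin x := Real.sin_pos_of_pos_of_lt_pi hx0 hxpi
  have hxt : π * t = x := by rw [ht]; field_simp
  have hE := Real.tendsto_euler_sin_prod t
  rw [hxt] at hE
  have hE' : Tendsto (fun n : ℕ => x * ∏ j ∈ Finset.range n, (1 - a j)) atTop (𝓝 (Real.sin x)) := by
    exact hE
  have hprod_pos : ∀ n : ℕ, 0 < ∏ j ∈ Finset.range n, (1 - a j) := by
    intro n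
    exact Finset.prod_pos fun j _ => h1a j
  have hlogE : Tendsto (fun n : ℕ => Real.log (x * ∏ j ∈ Finset.range n, (1 - a j))) atTop
      (𝓝 (Real.log (Real.sin x))) :=
    ((Real.continuousAt_log hsin_pos.ne').tendsto.comp hE')
  have hlog_eq : ∀ n : ℕ, Real.log (x * ∏ j ∈ Finset.range n, (1 - a j)) =
      Real.log x + ∑ j ∈ Finset.range n, Real.log (1 - a j) := by
    intro n
    rw [Real.log_mul hx0.ne' (hprod_pos n).ne', Real.log_prod]
    intro j _
    exact (h1a j).ne'
  have htends : Tendsto (fun n : ℕ => ∑ j ∈ Finset.range n, Real.log (1 - a j)) atTop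
      (𝓝 (Real.log (Real.sin x / x))) := by
    have : Tendsto (fun n : ℕ => Real.log (x * ∏ j ∈ Finset.range n, (1 - a j)) - Real.log x)
        atTop (𝓝 (Real.log (Real.sin x) - Real.log x)) := hlogE.sub tendsto_const_nhds
    rw [Real.log_div hsin_pos.ne' hx0.ne']
    refine this.congr fun n => ?_
    rw [hlog_eq n]; ring
  have hL : HasSum (fun n => Real.log (1 - a n)) (Real.log (Real.sin x / x)) :=
    (hsum_L.hasSum_iff_tendsto_nat).mpr htends
  -- double sum
  set G : ℕ × ℕ → ℝ := fun p => a p.1 ^ (p.2 + 1) / ((p.2 : ℝ) + 1) with hG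
  have hfiber : ∀ n, HasSum (fun k => G (n, k)) (-Real.log (1 - a n)) := by
    intro n
    have := hasSum_pow_div_log_of_abs_lt_one
      (x := a n) (by rw [abs_of_pos (ha_pos n)]; exact ha_lt n)
    simpa [hG] using this
  have hG_nonneg : ∀ p, 0 ≤ G p := by
    intro p
    exact div_nonneg (pow_nonneg (ha_pos p.1).le _) (by positivity)
  have hGsummable : Summable G := by
    refine (summable_prod_of_nonneg hG_nonneg).mpr ⟨fun n => (hfiber n).summable, ?_⟩
    refine hsum_La.congr fun n => ?_
    exact ((hfiber n).tsum_eq).symm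
  have hGS : HasSum G (-(Real.log (Real.sin x / x))) := by
    have h := hGsummable.hasSum
    have h2 : HasSum (fun n => -Real.log (1 - a n)) (∑' p, G p) :=
      h.prod_fiberwise hfiber
    have h3 : HasSum (fun n => -Real.log (1 - a n)) (-(Real.log (Real.sin x / x))) := hL.neg
    rwa [h2.unique h3] at h
  -- swap
  have hGS' : HasSum (fun p : ℕ × ℕ => G (p.2, p.1)) (-(Real.log (Real.sin x / x))) := by
    have := (Equiv.prodComm ℕ ℕ).hasSum_iff.mpr hGS
    exact this
  -- fiber over n for fixed k: zeta values
  have hfiber2 : ∀ k : ℕ, HasSum (fun n => G (n, k))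
      ((t ^ 2) ^ (k + 1) / ((k : ℝ) + 1) *
        ((-1 : ℝ) ^ (k + 1 + 1) * (2 : ℝ) ^ (2 * (k + 1) - 1) * π ^ (2 * (k + 1)) *
          bernoulli (2 * (k + 1)) / ((2 * (k + 1)).factorial : ℝ))) := by
    intro k
    have hz := hasSum_zeta_nat (k := k + 1) (Nat.succ_ne_zero k)
    have hshift : HasSum (fun n : ℕ => 1 / ((n : ℝ) + 1) ^ (2 * (k + 1)))
        ((-1 : ℝ) ^ (k + 1 + 1) * (2 : ℝ) ^ (2 * (k + 1) - 1) * π ^ (2 * (k + 1)) *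
          bernoulli (2 * (k + 1)) / ((2 * (k + 1)).factorial : ℝ)) := by
      have h0 := (hasSum_nat_add_iff (f := fun n : ℕ => 1 / (n : ℝ) ^ (2 * (k + 1))) 1).mpr
        (by simpa using hz)
      simpa using h0
    have := hshift.mul_left ((t ^ 2) ^ (k + 1) / ((k : ℝ) + 1))
    convert this using 2 with n
    · rfl
    simp only [hG, ha]
    rw [pow_mul, div_pow]
    ring
  have hc : HasSum (fun k : ℕ => (t ^ 2) ^ (k + 1) / ((k : ℝ) + 1) *
        ((-1 : ℝ) ^ (k + 1 + 1) * (2 : ℝ) ^ (2 * (k + 1) - 1) * π ^ (2 * (k + 1)) *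
          bernoulli (2 * (k + 1)) / ((2 * (k + 1)).factorial : ℝ))) (-(Real.log (Real.sin x / x))) :=
    hGS'.prod_fiberwise hfiber2
  have hfinal := hc.neg
  rw [neg_neg] at hfinal
  suffices h : (fun k : ℕ => ((-4 : ℝ) ^ (k + 1) * (bernoulli (2 * (k + 1)) : ℝ) /
      (((2 * (k + 1)) * Nat.factorial (2 * (k + 1)) : ℕ) : ℝ)) * x ^ (2 * (k + 1))) =
    (fun k : ℕ => -((t ^ 2) ^ (k + 1) / ((k : ℝ) + 1) *
        ((-1 : ℝ) ^ (k + 1 + 1) * (2 : ℝ) ^ (2 * (k + 1) - 1) * π ^ (2 * (k + 1)) *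
          (bernoulli (2 * (k + 1)) : ℝ) / ((2 * (k + 1)).factorial : ℝ)))) by
    rw [h]; exact hfinal
  funext k
  have hfac : ((2 * (k + 1)).factorial : ℝ) ≠ 0 :=
    Nat.cast_ne_zero.mpr (Nat.factorial_ne_zero _)
  have hk1 : ((k : ℝ) + 1) ≠ 0 := by positivity
  have h2p : (2 : ℝ) ^ (2 * (k + 1)) = 2 ^ (2 * (k + 1) - 1) * 2 := by
    rw [← pow_succ]
    exact congrArg (fun m => (2:ℝ) ^ m) (by omega)
  have h4 : (-4 : ℝ) ^ (k + 1) = (-1) ^ (k + 1) * 2 ^ (2 * (k + 1)) := by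
    rw [show ((-4 : ℝ)) = -1 * 2 ^ 2 by norm_num, mul_pow, ← pow_mul]
  have htx : (t ^ 2) ^ (k + 1) = x ^ (2 * (k + 1)) / π ^ (2 * (k + 1)) := by
    rw [ht, div_pow, div_pow, ← pow_mul, ← pow_mul]
  have hpik : (π : ℝ) ^ (2 * (k + 1)) ≠ 0 := by positivity
  have h2p' : (2 : ℝ) ^ (2 * (k + 1) - 1) = 2 ^ (2 * (k + 1)) / 2 := by
    rw [eq_div_iff (two_ne_zero), ← h2p]
  rw [htx, h4, h2p']
  have h2k : ((2 * (k + 1) : ℕ) : ℝ) ≠ 0 := by positivity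
  push_cast
  field_simp
  ring
end

section
/- Define φ : ℝ → ℝ by the everywhere-convergent power series φ(s) = Σ_{k=0}^∞ (−1)^k s^k/(2k+1)! (so that φ(x²) = sin(x)/x for x ≠ 0). Let λ_1, …, λ_n ∈ ℝ and let ρ > 0 satisfy |λ_i|·ρ² < π² for all i. Then the series Σ_{k=1}^∞ ((−4)^k · B_{2k}/(2k·(2k)!)) · (Σ_{i=1}^n λ_i^k) · ρ^{2k} converges and ∏_{i=1}^n φ(λ_i ρ²) = exp( Σ_{k=1}^∞ ((−4)^k · B_{2k}/(2k·(2k)!)) · (Σ_{i=1}^n λ_i^k) · ρ^{2k} ), where B_{2k} denotes the 2k-th Bernoulli number. -/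
/-- The entire function `φ` with power series `φ(s) = Σ_{k≥0} (−1)^k s^k/(2k+1)!`,
so that `φ(x²) = sin x / x` for `x ≠ 0`. -/
noncomputable def phi (s : ℝ) : ℝ := ∑' k : ℕ, (-1 : ℝ) ^ k * s ^ k / (Nat.factorial (2 * k + 1) : ℝ)

lemma phi_summable (s : ℝ) :
    Summable (fun k : ℕ => (-1 : ℝ) ^ k * s ^ k / (Nat.factorial (2 * k + 1) : ℝ)) := by
  apply Summable.of_abs
  refine Summable.of_nonneg_of_le (fun k => abs_nonneg _) (fun k => ?_)
    (Real.summable_pow_div_factorial |s|)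
  rw [abs_div, abs_mul, abs_pow, abs_pow, abs_neg, abs_one, one_pow, one_mul, Nat.abs_cast]
  apply div_le_div_of_nonneg_left (by positivity) (by positivity)
  exact_mod_cast Nat.factorial_le (by omega)

lemma phi_hasSum (s : ℝ) :
    HasSum (fun k : ℕ => (-1 : ℝ) ^ k * s ^ k / (Nat.factorial (2 * k + 1) : ℝ)) (phi s) :=
  (phi_summable s).hasSum

lemma phi_mul_eq_sin (s : ℝ) (w : ℂ) (hw : w ^ 2 = (s : ℂ)) :
    w * (phi s : ℂ) = Complex.sin w := by
  have h2 : HasSum (fun k : ℕ => ((((-1 : ℝ) ^ k * s ^ k / (Nat.factorial (2 * k + 1) : ℝ)) : ℝ) : ℂ))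
      ((phi s : ℝ) : ℂ) := Complex.hasSum_ofReal.mpr (phi_hasSum s)
  have h3 := h2.mul_left w
  have h4 := Complex.hasSum_sin w
  refine h3.unique (h4.congr_fun fun k => ?_)
  push_cast
  rw [pow_succ, pow_mul, hw]
  ring

open Real Filter Finset Topology
set_option maxHeartbeats 1000000

lemma phi_key (s : ℝ) (hs : |s| < Real.pi ^ 2) :
    ∃ S : ℝ,
      HasSum (fun k : ℕ =>
        ((-4 : ℝ) ^ (k + 1) * (bernoulli (2 * (k + 1)) : ℝ) /
            (((2 * (k + 1)) * Nat.factorial (2 * (k + 1)) : ℕ) : ℝ)) * s ^ (k + 1)) S ∧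
      phi s = Real.exp S := by
  rcases eq_or_ne s 0 with rfl | hs0
  · refine ⟨0, by simpa using hasSum_zero, ?_⟩
    rw [Real.exp_zero, phi, tsum_eq_single 0 (fun k hk => by simp [zero_pow hk])]
    simp
  have hπ : (0:ℝ) < Real.pi ^ 2 := by positivity
  set r : ℝ := |s| / Real.pi ^ 2 with hr_def
  have hr0 : 0 ≤ r := by positivity
  have hr1 : r < 1 := (div_lt_one hπ).mpr hs
  set u : ℕ → ℝ := fun j => s / (((j:ℝ) + 1) ^ 2 * Real.pi ^ 2) with hu_def
  have hj2 : ∀ j : ℕ, (0:ℝ) < ((j:ℝ) + 1) ^ 2 := fun j => by positivity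
  have hu_eq : ∀ j, |u j| = r / ((j:ℝ) + 1) ^ 2 := by
    intro j
    rw [hu_def, hr_def]
    rw [abs_div, abs_of_pos (by positivity : (0:ℝ) < ((j:ℝ)+1)^2 * Real.pi ^ 2)]
    field_simp
  have hu_le : ∀ j, |u j| ≤ r := by
    intro j
    rw [hu_eq j]
    apply div_le_self hr0
    nlinarith [Nat.cast_nonneg (α := ℝ) j]
  have hu_lt : ∀ j, |u j| < 1 := fun j => lt_of_le_of_lt (hu_le j) hr1
  set F : ℕ × ℕ → ℝ := fun p => -(u p.1 ^ (p.2 + 1) / ((p.2 : ℝ) + 1)) with hF_def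
  -- summability of F
  have hFs : Summable F := by
    apply Summable.of_abs
    have hg : Summable (fun j : ℕ => 1 / ((j:ℝ) + 1) ^ 2) := by
      have h2 : Summable (fun n : ℕ => 1 / (n : ℝ) ^ 2) :=
        (Real.summable_one_div_nat_pow).mpr one_lt_two
      have := (summable_nat_add_iff 1).mpr h2
      apply this.congr
      intro j; push_cast; ring
    have hh : Summable (fun k : ℕ => r ^ (k + 1)) :=
      ((summable_geometric_of_lt_one hr0 hr1).mul_left r).congr
        (fun k => by rw [pow_succ]; ring)
    have hmaj : Summable (fun p : ℕ × ℕ => (1 / ((p.1:ℝ) + 1) ^ 2) * r ^ (p.2 + 1)) :=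
      hg.mul_of_nonneg hh (Pi.le_def.mpr fun j => by positivity)
        (Pi.le_def.mpr fun k => by positivity)
    refine hmaj.of_nonneg_of_le (fun p => abs_nonneg _) (fun p => ?_)
    obtain ⟨j, k⟩ := p
    have h1 : |F (j,k)| ≤ |u j| ^ (k + 1) := by
      rw [hF_def, abs_neg, abs_div, abs_pow, abs_of_pos (by positivity : (0:ℝ) < (k:ℝ)+1)]
      apply div_le_self (by positivity)
      linarith [Nat.cast_nonneg (α := ℝ) k]
    refine h1.trans ?_
    rw [hu_eq j]
    calc (r / ((j:ℝ)+1)^2) ^ (k+1)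
        = (1/((j:ℝ)+1)^2) ^ (k+1) * r ^ (k+1) := by
          rw [div_eq_mul_one_div r, mul_pow, mul_comm]
      _ ≤ (1/((j:ℝ)+1)^2) * r ^ (k+1) := by
          have hle : 1/((j:ℝ)+1)^2 ≤ 1 := by
            rw [div_le_one (hj2 j)]
            nlinarith [Nat.cast_nonneg (α := ℝ) j]
          exact mul_le_mul_of_nonneg_right
            ((pow_le_pow_of_le_one (by positivity) hle (Nat.le_add_left 1 k)).trans_eq (pow_one _)) (by positivity)
  have hT := hFs.hasSum
  set T := ∑' p, F p with hT_def
  -- row sums : logs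
  have hrow : ∀ j, HasSum (fun k => F (j, k)) (Real.log (1 - u j)) := by
    intro j
    have := (hasSum_pow_div_log_of_abs_lt_one (hu_lt j)).neg
    rw [neg_neg] at this
    apply this.congr
    intro k
    rw [hF_def]
  have hlog : HasSum (fun j => Real.log (1 - u j)) T := hT.prod_fiberwise hrow
  -- column sums : zeta values
  have hcol : ∀ k : ℕ, HasSum (fun j => F (j, k))
      (((-4 : ℝ) ^ (k + 1) * (bernoulli (2 * (k + 1)) : ℝ) /
            (((2 * (k + 1)) * Nat.factorial (2 * (k + 1)) : ℕ) : ℝ)) * s ^ (k + 1)) := by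
    intro k
    have hk : k + 1 ≠ 0 := Nat.succ_ne_zero k
    have hz := hasSum_zeta_nat hk
    have hz1 : HasSum (fun j : ℕ => 1 / ((j:ℝ) + 1) ^ (2 * (k + 1)))
        ((-1 : ℝ) ^ (k + 1 + 1) * 2 ^ (2 * (k + 1) - 1) * Real.pi ^ (2 * (k + 1)) *
          (bernoulli (2 * (k + 1)) : ℝ) / (Nat.factorial (2 * (k + 1)) : ℝ)) := by
      have h0 : (fun n : ℕ => 1 / (n : ℝ) ^ (2 * (k + 1))) 0 = 0 := by
        norm_num [zero_pow (by omega : 2 * (k + 1) ≠ 0)]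
      have h2 := (hasSum_nat_add_iff' (f := fun n : ℕ => 1 / (n : ℝ) ^ (2 * (k + 1))) 1).mpr hz
      simp only [Finset.range_one, Finset.sum_singleton, h0, sub_zero] at h2
      exact h2.congr_fun (fun j => by push_cast; ring_nf)
    have hmul := hz1.mul_left (-((s / Real.pi ^ 2) ^ (k + 1) / ((k : ℝ) + 1)))
    have hfun : ∀ j : ℕ, (-((s / Real.pi ^ 2) ^ (k + 1) / ((k : ℝ) + 1))) *
        (1 / ((j:ℝ) + 1) ^ (2 * (k + 1))) = F (j, k) := by
      intro j
      rw [hF_def, hu_def]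
      simp only
      rw [(by rw [← pow_mul, mul_comm 2 (k+1)] : ((j:ℝ) + 1) ^ (2 * (k + 1)) = (((j:ℝ)+1)^2) ^ (k+1))]
      rw [div_pow, div_pow, mul_pow]
      have hjj : (((j:ℝ)+1)^2) ^ (k+1) ≠ 0 := by positivity
      have hpp : ((Real.pi^2) ^ (k+1) : ℝ) ≠ 0 := by positivity
      have hkk : ((k:ℝ)+1) ≠ 0 := by positivity
      field_simp
    have hval : (-((s / Real.pi ^ 2) ^ (k + 1) / ((k : ℝ) + 1))) *
        ((-1 : ℝ) ^ (k + 1 + 1) * 2 ^ (2 * (k + 1) - 1) * Real.pi ^ (2 * (k + 1)) *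
          (bernoulli (2 * (k + 1)) : ℝ) / (Nat.factorial (2 * (k + 1)) : ℝ)) =
        ((-4 : ℝ) ^ (k + 1) * (bernoulli (2 * (k + 1)) : ℝ) /
            (((2 * (k + 1)) * Nat.factorial (2 * (k + 1)) : ℕ) : ℝ)) * s ^ (k + 1) := by
      have e1 : 2 * (k + 1) - 1 = 2 * k + 1 := by omega
      have e2 : Real.pi ^ (2 * (k + 1)) = (Real.pi ^ 2) ^ (k + 1) := by
        rw [← pow_mul, mul_comm]
      have hf0 : (Nat.factorial (2 * (k + 1)) : ℝ) ≠ 0 := by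
        exact_mod_cast Nat.factorial_ne_zero _
      have hkk : ((k:ℝ) + 1) ≠ 0 := by positivity
      have hpp : ((Real.pi ^ 2) ^ (k + 1) : ℝ) ≠ 0 := by positivity
      rw [e1, e2, div_pow,
        (by rw [(by norm_num : (-4:ℝ) = -1 * 2 ^ 2), mul_pow, ← pow_mul] :
          ((-4:ℝ)) ^ (k+1) = (-1) ^ (k+1) * 2 ^ (2 * (k+1)))]
      push_cast
      field_simp
      ring
    rw [← hval]
    exact hmul.congr_fun (fun j => (hfun j).symm)
  have hcolsum : HasSum (fun k : ℕ =>
      ((-4 : ℝ) ^ (k + 1) * (bernoulli (2 * (k + 1)) : ℝ) /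
          (((2 * (k + 1)) * Nat.factorial (2 * (k + 1)) : ℕ) : ℝ)) * s ^ (k + 1)) T := by
    have hswap : HasSum (fun p : ℕ × ℕ => F (p.2, p.1)) T :=
      ((Equiv.prodComm ℕ ℕ).hasSum_iff).mpr hT
    exact hswap.prod_fiberwise hcol
  refine ⟨T, hcolsum, ?_⟩
  -- convergence of partial products to exp T
  have hpos : ∀ j, (0:ℝ) < 1 - u j := by
    intro j
    have := hu_lt j
    have := abs_lt.mp this
    linarith [this.2]
  have h8 : Tendsto (fun n => ∏ j ∈ Finset.range n, (1 - u j)) atTop (𝓝 (Real.exp T)) := by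
    have h5 := hlog.tendsto_sum_nat
    have h6 := (Real.continuous_exp.tendsto T).comp h5
    apply h6.congr
    intro n
    simp only [Function.comp_apply]
    rw [Real.exp_sum]
    exact Finset.prod_congr rfl fun j _ => Real.exp_log (hpos j)
  -- Euler product
  set w : ℂ := if 0 ≤ s then ((Real.sqrt s : ℝ) : ℂ) else ((Real.sqrt (-s) : ℝ) : ℂ) * Complex.I
    with hw_def
  have hw : w ^ 2 = (s : ℂ) := by
    rw [hw_def]
    split_ifs with h
    · rw [← Complex.ofReal_pow, Real.sq_sqrt h]
    · rw [mul_pow, Complex.I_sq, ← Complex.ofReal_pow, Real.sq_sqrt (by linarith)]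
      push_cast
      ring
  have hw0 : w ≠ 0 := by
    intro h
    rw [h] at hw
    simp only [ne_eq, zero_pow, OfNat.ofNat_ne_zero, not_false_iff] at hw
    exact hs0 (by exact_mod_cast hw.symm)
  have hπ0 : ((Real.pi : ℝ) : ℂ) ≠ 0 := Complex.ofReal_ne_zero.mpr Real.pi_ne_zero
  set z : ℂ := w / (Real.pi : ℂ) with hz_def
  have hπz : (Real.pi : ℂ) * z = w := mul_div_cancel₀ w hπ0
  have heuler := Complex.tendsto_euler_sin_prod z
  have heuler' : Tendsto (fun n : ℕ => w * ((∏ j ∈ Finset.range n, (1 - u j) : ℝ) : ℂ))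
      atTop (𝓝 (Complex.sin w)) := by
    rw [← hπz]
    apply heuler.congr
    intro n
    rw [hπz, Complex.ofReal_prod]
    congr 1
    apply Finset.prod_congr rfl
    intro j _
    have hzsq : z ^ 2 = (s : ℂ) / (Real.pi : ℂ) ^ 2 := by
      rw [hz_def, div_pow, hw]
    rw [hzsq, hu_def]
    push_cast
    field_simp
  have h9 : Tendsto (fun n : ℕ => w * ((∏ j ∈ Finset.range n, (1 - u j) : ℝ) : ℂ))
      atTop (𝓝 (w * ((Real.exp T : ℝ) : ℂ))) :=
    ((Complex.continuous_ofReal.tendsto _).comp h8).const_mul w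
  have h10 : Complex.sin w = w * ((Real.exp T : ℝ) : ℂ) := tendsto_nhds_unique heuler' h9
  have h11 := phi_mul_eq_sin s w hw
  rw [h10] at h11
  have := mul_left_cancel₀ hw0 h11
  exact_mod_cast this


/-- If `|λ_i| ρ² < π²` for all `i` (with `ρ > 0`), then the series
`Σ_{k≥1} ((−4)^k B_{2k}/(2k·(2k)!)) (Σ_i λ_i^k) ρ^{2k}` converges to some `S` and
`∏_i φ(λ_i ρ²) = exp S`. -/
theorem stmt_9 (n : ℕ) (lam : Fin n → ℝ) (ρ : ℝ) (hρ : 0 < ρ)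
    (hsmall : ∀ i, |lam i| * ρ ^ 2 < Real.pi ^ 2) :
    ∃ S : ℝ,
      HasSum
        (fun k : ℕ =>
          ((-4 : ℝ) ^ (k + 1) * (bernoulli (2 * (k + 1)) : ℝ) /
              (((2 * (k + 1)) * Nat.factorial (2 * (k + 1)) : ℕ) : ℝ)) *
            (∑ i, lam i ^ (k + 1)) * ρ ^ (2 * (k + 1)))
        S ∧
      (∏ i, phi (lam i * ρ ^ 2)) = Real.exp S := by
  have h : ∀ i : Fin n, ∃ S : ℝ,
      HasSum (fun k : ℕ =>
        ((-4 : ℝ) ^ (k + 1) * (bernoulli (2 * (k + 1)) : ℝ) /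
            (((2 * (k + 1)) * Nat.factorial (2 * (k + 1)) : ℕ) : ℝ)) *
          (lam i * ρ ^ 2) ^ (k + 1)) S ∧ phi (lam i * ρ ^ 2) = Real.exp S := by
    intro i
    apply phi_key
    rw [abs_mul, abs_of_nonneg (by positivity : (0:ℝ) ≤ ρ ^ 2)]
    exact hsmall i
  choose S hS hphi using h
  refine ⟨∑ i, S i, ?_, ?_⟩
  · have hsum := hasSum_sum (s := Finset.univ) (fun i _ => hS i)
    apply hsum.congr_fun
    intro k
    rw [Finset.mul_sum, Finset.sum_mul]
    apply Finset.sum_congr rfl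
    intro i _
    rw [mul_pow, ← pow_mul]
    ring
  · rw [Finset.prod_congr rfl (fun i _ => hphi i), ← Real.exp_sum]
end
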